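/- In the bargaining game M_{x,f}, for every pure classifier g : X → [0,3] and every strategy of the market player, there exist beliefs for the firm and each candidate under which the profile 'firm offers g(x), candidate accepts' is a self-confirming equilibrium: namely, set beliefs so that o_f(x) = o_x(x) = g(x) and o_f(f) = 3 for each x. -/
import Mathlib


/-- Firm's believed expected utility in candidate `x`'s game, offering `w`, believing the
candidate accepts iff `w ≥ o_fx` and that its own expected outside option is `o_ff`. -/
noncomputable def firmBelievedUtility (o_ff o_fx w : ℝ) : ℝ :=
  if o_fx ≤ w then 2 - w else 2 - o_ff

/-- **Any classifier is an SCE strategy (Proposition 1, second part).** In `M_{x,f}`, for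
every pure classifier `g : X → [0,3]` and every strategy `(o(f), o(x))` of the market
player, there exist beliefs — namely `o_f(x) = o_x(x) = g(x)` and `o_f(f) = 3` — under
which the profile "the firm offers `g(x)`, the candidate accepts" is a self-confirming
equilibrium: the belief inequalities `o_f(f) ≥ o_f(x) ≥ o_x(x)` hold, the offer `g(x)`
maximizes the firm's believed expected utility over `[0,3]`, and accepting maximizes the
candidate's believed utility. -/
theorem any_classifier_is_sce
    {X : Type*} (g : X → ℝ) (hg : ∀ x, g x ∈ Set.Icc (0:ℝ) 3)
    (o_market : X → ℝ × ℝ)  -- the market's strategy (o(f), o(x)), arbitrary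
    : ∃ o_ff o_fx o_xx : X → ℝ,
      (∀ x, o_fx x = g x ∧ o_xx x = g x ∧ o_ff x = 3)
      ∧ (∀ x, o_ff x ≥ o_fx x ∧ o_fx x ≥ o_xx x)
      ∧ (∀ x, ∀ w ∈ Set.Icc (0:ℝ) 3,
          firmBelievedUtility (o_ff x) (o_fx x) (g x)
            ≥ firmBelievedUtility (o_ff x) (o_fx x) w)
      ∧ (∀ x, g x - 1 ≥ o_xx x - 1) := by
  refine ⟨fun _ => 3, g, g, fun x => ⟨rfl, rfl, rfl⟩, fun x => ⟨(hg x).2, le_refl _⟩,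
    fun x w hw => ?_, fun x => le_refl _⟩
  unfold firmBelievedUtility
  rw [if_pos (le_refl _)]
  split_ifs with h
  · linarith
  · simp only; linarith [(hg x).2]
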